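/- In the ring R = ℤ[x,y]/⟨x², y² − xy⟩ (graded with x, y in degree 2), the square of the element y is nonzero, while in ℤ[x,y]/⟨x², y²⟩ every element a·x + b·y with ab = 0 squares to zero; moreover in R the quadratic form q(a,b) = (ax+by)² = (2ab+b²)·xy on the degree-2 part represents odd values, whereas in ℤ[x,y]/⟨x²,y²⟩ the form (ax+by)² = 2ab·xy only represents even values; hence the two graded rings are not isomorphic. -/
import Mathlib


open MvPolynomial

/-- `R = ℤ[x,y]/⟨x², y² − xy⟩`. -/
abbrev RingR : Type :=
  MvPolynomial (Fin 2) ℤ ⧸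
    Ideal.span ({X 0 ^ 2, X 1 ^ 2 - X 0 * X 1} : Set (MvPolynomial (Fin 2) ℤ))

/-- `S = ℤ[x,y]/⟨x², y²⟩`, the cohomology ring of `ℂP¹ × ℂP¹`. -/
abbrev RingS : Type :=
  MvPolynomial (Fin 2) ℤ ⧸
    Ideal.span ({X 0 ^ 2, X 1 ^ 2} : Set (MvPolynomial (Fin 2) ℤ))

noncomputable def xR : RingR := Ideal.Quotient.mk _ (X 0)
noncomputable def yR : RingR := Ideal.Quotient.mk _ (X 1)
noncomputable def xS : RingS := Ideal.Quotient.mk _ (X 0)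
noncomputable def yS : RingS := Ideal.Quotient.mk _ (X 1)

namespace CuspAux


lemma c1 (q : MvPolynomial (Fin 2) ℤ) :
    coeff (Finsupp.single 1 2) (q * X 0 ^ 2) = 0 := by
  rw [pow_two, ← mul_assoc, coeff_mul_X', coeff_mul_X']; simp

lemma c2 (q : MvPolynomial (Fin 2) ℤ) :
    coeff (Finsupp.single 1 2) (q * X 1 ^ 2) = coeff 0 q := by
  rw [pow_two, ← mul_assoc, coeff_mul_X', coeff_mul_X']
  simp
  congr 1
  ext i
  fin_cases i <;> simp

lemma c3 (q : MvPolynomial (Fin 2) ℤ) :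
    coeff (Finsupp.single 1 2) (q * (X 0 * X 1)) = 0 := by
  rw [← mul_assoc, coeff_mul_X', coeff_mul_X']
  simp [Finsupp.single_apply]

lemma c4 (q : MvPolynomial (Fin 2) ℤ) :
    coeff (Finsupp.single 0 1 + Finsupp.single 1 1) (q * X 0 ^ 2) = 0 := by
  rw [pow_two, ← mul_assoc, coeff_mul_X', coeff_mul_X']; simp

lemma c5 (q : MvPolynomial (Fin 2) ℤ) :
    coeff (Finsupp.single 0 1 + Finsupp.single 1 1) (q * X 1 ^ 2) = 0 := by
  rw [pow_two, ← mul_assoc, coeff_mul_X', coeff_mul_X']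
  simp [Finsupp.single_apply]

lemma c6 (q : MvPolynomial (Fin 2) ℤ) :
    coeff (Finsupp.single 0 1 + Finsupp.single 1 1) (q * (X 0 * X 1)) = coeff 0 q := by
  rw [← mul_assoc, coeff_mul_X', coeff_mul_X']
  simp

lemma c7 (q : MvPolynomial (Fin 2) ℤ) (i j : Fin 2) :
    coeff (Finsupp.single i 1) (q * X j ^ 2) = 0 := by
  rw [pow_two, ← mul_assoc, coeff_mul_X', coeff_mul_X']
  simp [Finsupp.single_apply]
  intro h h2
  subst h
  simp at h2

lemma LR (p : MvPolynomial (Fin 2) ℤ)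
    (hp : p ∈ Ideal.span ({X 0 ^ 2, X 1 ^ 2 - X 0 * X 1} : Set (MvPolynomial (Fin 2) ℤ))) :
    coeff (Finsupp.single 1 2) p + coeff (Finsupp.single 0 1 + Finsupp.single 1 1) p = 0 := by
  obtain ⟨a, b, rfl⟩ := Ideal.mem_span_pair.mp hp
  simp only [coeff_add, mul_sub, coeff_sub]
  rw [c1, c2, c3, c4, c5, c6]
  ring

lemma LS (p : MvPolynomial (Fin 2) ℤ)
    (hp : p ∈ Ideal.span ({X 0 ^ 2, X 1 ^ 2} : Set (MvPolynomial (Fin 2) ℤ))) :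
    coeff (Finsupp.single 0 1 + Finsupp.single 1 1) p = 0 := by
  obtain ⟨a, b, rfl⟩ := Ideal.mem_span_pair.mp hp
  simp only [coeff_add]
  rw [c4, c5]; ring

lemma LSi (p : MvPolynomial (Fin 2) ℤ)
    (hp : p ∈ Ideal.span ({X 0 ^ 2, X 1 ^ 2} : Set (MvPolynomial (Fin 2) ℤ))) (i : Fin 2) :
    coeff (Finsupp.single i 1) p = 0 := by
  obtain ⟨a, b, rfl⟩ := Ideal.mem_span_pair.mp hp
  simp only [coeff_add]
  rw [c7, c7]; ring

lemma hxS2 : xS ^ 2 = 0 := by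
  rw [xS, ← map_pow, Ideal.Quotient.eq_zero_iff_mem]
  exact Ideal.subset_span (by simp)

lemma hyS2 : yS ^ 2 = 0 := by
  rw [yS, ← map_pow, Ideal.Quotient.eq_zero_iff_mem]
  exact Ideal.subset_span (by simp)

lemma hxR2 : xR ^ 2 = 0 := by
  rw [xR, ← map_pow, Ideal.Quotient.eq_zero_iff_mem]
  exact Ideal.subset_span (by simp)

lemma hyR2 : yR ^ 2 = xR * yR := by
  rw [yR, xR, ← map_pow, ← map_mul, Ideal.Quotient.eq]
  exact Ideal.subset_span (by simp)

lemma yR2ne : yR ^ 2 ≠ 0 := by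
  rw [yR, ← map_pow, Ne, Ideal.Quotient.eq_zero_iff_mem]
  intro h
  have := LR _ h
  rw [show (X 1 ^ 2 : MvPolynomial (Fin 2) ℤ) = 1 * X 1 ^ 2 by ring, c2, c5] at this
  simp at this

lemma sqS (a b : ℤ) : (a • xS + b • yS) ^ 2 = (2 * a * b) • (xS * yS) := by
  simp only [zsmul_eq_mul]
  push_cast
  linear_combination (a : RingS) ^ 2 * hxS2 + (b : RingS) ^ 2 * hyS2

lemma mulS (c d a b : ℤ) :
    (c • xS + d • yS) * (a • xS + b • yS) = (c * b + d * a) • (xS * yS) := by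
  simp only [zsmul_eq_mul]
  push_cast
  linear_combination (c : RingS) * a * hxS2 + (d : RingS) * b * hyS2

lemma sqR (a b : ℤ) : (a • xR + b • yR) ^ 2 = (2 * a * b + b ^ 2) • (xR * yR) := by
  simp only [zsmul_eq_mul]
  push_cast
  linear_combination (a : RingR) ^ 2 * hxR2 + (b : RingR) ^ 2 * hyR2

lemma indS (u v : ℤ) (h : u • xS + v • yS = 0) : u = 0 ∧ v = 0 := by
  rw [xS, yS, ← map_zsmul, ← map_zsmul, ← map_add, Ideal.Quotient.eq_zero_iff_mem] at h
  constructor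
  · have := LSi _ h 0
    simp only [coeff_add, coeff_smul, coeff_X'] at this
    simpa [Finsupp.single_eq_single_iff] using this
  · have := LSi _ h 1
    simp only [coeff_add, coeff_smul, coeff_X'] at this
    simpa [Finsupp.single_eq_single_iff] using this

lemma injXYS (k : ℤ) (h : k • (xS * yS) = 0) : k = 0 := by
  rw [xS, yS, ← map_mul, ← map_zsmul, Ideal.Quotient.eq_zero_iff_mem] at h
  have := LS _ h
  rw [coeff_smul] at this
  rw [show (X 0 * X 1 : MvPolynomial (Fin 2) ℤ) = 1 * (X 0 * X 1) by ring, c6] at this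
  simpa using this

set_option maxHeartbeats 1000000 in
set_option synthInstance.maxHeartbeats 400000 in
lemma main :
    ¬ ∃ e : RingR ≃+* RingS,
        e '' (Submodule.span ℤ ({xR, yR} : Set RingR) : Set RingR) =
          (Submodule.span ℤ ({xS, yS} : Set RingS) : Set RingS) := by
  rintro ⟨e, he⟩
  have hxRmem : xR ∈ Submodule.span ℤ ({xR, yR} : Set RingR) :=
    Submodule.subset_span (by simp)
  have hyRmem : yR ∈ Submodule.span ℤ ({xR, yR} : Set RingR) :=
    Submodule.subset_span (by simp)
  -- images of xR, yR
  have hex : (e xR : RingS) ∈ (Submodule.span ℤ ({xS, yS} : Set RingS) : Set RingS) := by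
    rw [← he]; exact ⟨xR, hxRmem, rfl⟩
  have hey : (e yR : RingS) ∈ (Submodule.span ℤ ({xS, yS} : Set RingS) : Set RingS) := by
    rw [← he]; exact ⟨yR, hyRmem, rfl⟩
  obtain ⟨c, d, hcd⟩ := Submodule.mem_span_pair.mp hex
  obtain ⟨a, b, hab⟩ := Submodule.mem_span_pair.mp hey
  -- preimages of xS, yS
  have hxSmem : xS ∈ e '' (Submodule.span ℤ ({xR, yR} : Set RingR) : Set RingR) := by
    rw [he]; exact Submodule.subset_span (by simp)
  have hySmem : yS ∈ e '' (Submodule.span ℤ ({xR, yR} : Set RingR) : Set RingR) := by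
    rw [he]; exact Submodule.subset_span (by simp)
  obtain ⟨p, hp, hep⟩ := hxSmem
  obtain ⟨m, n, rfl⟩ := Submodule.mem_span_pair.mp hp
  obtain ⟨q, hq, heq⟩ := hySmem
  obtain ⟨m', n', rfl⟩ := Submodule.mem_span_pair.mp hq
  rw [map_add, map_zsmul, map_zsmul] at hep heq
  -- hep : m • (c • xS + d • yS) + n • (a • xS + b • yS) = xS  (after rewriting e xR, e yR)
  rw [← hcd, ← hab] at hep heq
  have E12 := indS (m * c + n * a - 1) (m * d + n * b) (by
    simp only [zsmul_eq_mul] at hep ⊢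
    push_cast
    linear_combination hep)
  have E34 := indS (m' * c + n' * a) (m' * d + n' * b - 1) (by
    simp only [zsmul_eq_mul] at heq ⊢
    push_cast
    linear_combination heq)
  -- key parity equation
  have hsq : (2 * a * b) • (xS * yS) = (c * b + d * a) • (xS * yS) := by
    rw [← sqS a b, ← mulS c d a b, hcd, hab, ← map_mul, ← map_pow, hyR2]
  have E5 : c * b + d * a = 2 * a * b := by
    have := injXYS (2 * a * b - (c * b + d * a)) (by
      rw [sub_smul, hsq, sub_self])
    omega
  obtain ⟨E1, E2⟩ := E12
  obtain ⟨E3, E4⟩ := E34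
  have key2 : (m * n' - n * m') * (c * b - a * d) = 1 := by
    linear_combination (m' * d + n' * b) * E1 + E4 - (m * d + n * b) * E3
  have h21 : (2 : ℤ) ∣ 1 :=
    ⟨(m * n' - n * m') * (a * b - a * d), by linear_combination (m * n' - n * m') * E5 - key2⟩
  norm_num at h21


end CuspAux

/-- In `R = ℤ[x,y]/⟨x², y² − xy⟩` the element `y` has nonzero square, while in
`ℤ[x,y]/⟨x², y²⟩` every `a·x + b·y` with `ab = 0` squares to zero; the squaring
quadratic form on the degree-2 part is `(ax+by)² = (2ab+b²)·xy` in `R` and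
`(ax+by)² = 2ab·xy` in `S`, the former representing all integers (in particular
odd ones) and the latter only even ones; hence the two graded rings are not
isomorphic (no ring isomorphism matches up the degree-2 parts). -/
theorem cusp_cohomology_rings_not_isomorphic :
    yR ^ 2 ≠ 0 ∧
    (∀ a b : ℤ, a * b = 0 → (a • xS + b • yS) ^ 2 = 0) ∧
    (∀ a b : ℤ, (a • xR + b • yR) ^ 2 = (2 * a * b + b ^ 2) • (xR * yR)) ∧
    (∀ a b : ℤ, (a • xS + b • yS) ^ 2 = (2 * a * b) • (xS * yS)) ∧
    (∃ a b : ℤ, Odd (2 * a * b + b ^ 2)) ∧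
    (∀ a b : ℤ, Even (2 * a * b)) ∧
    ¬ ∃ e : RingR ≃+* RingS,
        e '' (Submodule.span ℤ ({xR, yR} : Set RingR) : Set RingR) =
          (Submodule.span ℤ ({xS, yS} : Set RingS) : Set RingS) := by
  refine ⟨CuspAux.yR2ne, ?_, CuspAux.sqR, CuspAux.sqS, ⟨0, 1, by norm_num⟩,
    fun a b => ⟨a * b, by ring⟩, CuspAux.main⟩
  intro a b hab
  have h0 : 2 * a * b = 0 := by rw [mul_assoc, hab, mul_zero]
  rw [CuspAux.sqS, h0, zero_smul]
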